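/- Let A and B be rings and M an (A,B)-bimodule that is finitely generated projective as a right B-module, with E = End_B(M) the endomorphism ring of M_B and i_M : A → E the ring map a ↦ (m ↦ am). Then M is totally faithful as a left A-module (i.e., for every right A-module X the map X → Hom_B(M, X ⊗_A M), x ↦ (m ↦ x ⊗ m), is injective) if and only if i_M is a pure morphism of left A-modules. -/

import Mathlib

open scoped TensorProduct
open MulOpposite

/-- The subgroup of `L ⊗[ℤ] M` by which one quotients to obtain the tensor product
`L ⊗[A] M` of a right `A`-module `L` and a left `A`-module `M` over a
(not necessarily commutative) ring `A`. -/
noncomputable def NCrel (A : Type) [Ring A] (L M : Type) [AddCommGroup L]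
    [AddCommGroup M] [Module Aᵐᵒᵖ L] [Module A M] : AddSubgroup (L ⊗[ℤ] M) :=
  AddSubgroup.closure
    {x | ∃ (l : L) (a : A) (m : M), x = (op a • l) ⊗ₜ[ℤ] m - l ⊗ₜ[ℤ] (a • m)}

/-- The tensor product `L ⊗[A] M` over a (not necessarily commutative) ring `A` of a
right `A`-module `L` and a left `A`-module `M`, as an abelian group. -/
abbrev NCT (A : Type) [Ring A] (L M : Type) [AddCommGroup L] [AddCommGroup M]
    [Module Aᵐᵒᵖ L] [Module A M] : Type :=
  (L ⊗[ℤ] M) ⧸ NCrel A L M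

/-- The elementary tensor `l ⊗ m` in `L ⊗[A] M`. -/
noncomputable def NCT.tmul (A : Type) [Ring A] {L M : Type} [AddCommGroup L]
    [AddCommGroup M] [Module Aᵐᵒᵖ L] [Module A M] (l : L) (m : M) : NCT A L M :=
  QuotientAddGroup.mk (l ⊗ₜ[ℤ] m)

/-- The map `L ⊗[A] f : L ⊗[A] M → L ⊗[A] N` induced by a morphism `f : M → N` of left
`A`-modules. -/
noncomputable def NCT.mapRight (A : Type) [Ring A] (L : Type) [AddCommGroup L]
    [Module Aᵐᵒᵖ L] {M N : Type} [AddCommGroup M] [AddCommGroup N] [Module A M]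
    [Module A N] (f : M →+ N) (hf : ∀ (a : A) (m : M), f (a • m) = a • f m) :
    NCT A L M →+ NCT A L N :=
  QuotientAddGroup.map _ _
    (TensorProduct.map LinearMap.id f.toIntLinearMap).toAddMonoidHom
    (by
      refine (AddSubgroup.closure_le _).mpr ?_
      rintro x ⟨l, a, m, rfl⟩
      simp only [SetLike.mem_coe, AddSubgroup.mem_comap, map_sub,
        LinearMap.toAddMonoidHom_coe, TensorProduct.map_tmul, LinearMap.id_coe, id_eq,
        AddMonoidHom.coe_toIntLinearMap]
      exact AddSubgroup.subset_closure ⟨l, a, f m, by rw [hf]⟩)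

/-- The map `f ⊗[A] M : L ⊗[A] M → L' ⊗[A] M` induced by a morphism `f : L → L'` of
right `A`-modules. -/
noncomputable def NCT.mapLeft (A : Type) [Ring A] {L L' : Type} [AddCommGroup L]
    [AddCommGroup L'] [Module Aᵐᵒᵖ L] [Module Aᵐᵒᵖ L'] (M : Type) [AddCommGroup M]
    [Module A M] (f : L →+ L') (hf : ∀ (a : Aᵐᵒᵖ) (l : L), f (a • l) = a • f l) :
    NCT A L M →+ NCT A L' M :=
  QuotientAddGroup.map _ _
    (TensorProduct.map f.toIntLinearMap LinearMap.id).toAddMonoidHom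
    (by
      refine (AddSubgroup.closure_le _).mpr ?_
      rintro x ⟨l, a, m, rfl⟩
      simp only [SetLike.mem_coe, AddSubgroup.mem_comap, map_sub,
        LinearMap.toAddMonoidHom_coe, TensorProduct.map_tmul, LinearMap.id_coe, id_eq,
        AddMonoidHom.coe_toIntLinearMap]
      exact AddSubgroup.subset_closure ⟨f l, a, m, by rw [hf]⟩)

/-- `i : A → B` is a pure morphism of left `A`-modules: for every right `A`-module `L`,
the map `L ⊗[A] i : L ⊗[A] A → L ⊗[A] B` is injective.  Here `B` is a left `A`-module
via `i`. -/
noncomputable def RingHom.LeftPure {A B : Type} [Ring A] [Ring B] (i : A →+* B) :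
    Prop :=
  ∀ (L : Type) (_ : AddCommGroup L) (_ : Module Aᵐᵒᵖ L),
    letI : Module A B := Module.compHom B i
    Function.Injective
      (NCT.mapRight A L (M := A) (N := B) i.toAddMonoidHom
        (fun a m => show i (a * m) = i a * i m from map_mul i a m))

/-- `i : A → B` is a pure morphism of right `A`-modules: for every left `A`-module `L`,
the map `i ⊗[A] L : A ⊗[A] L → B ⊗[A] L` is injective.  Here `B` is a right `A`-module
via `i`. -/
noncomputable def RingHom.RightPure {A B : Type} [Ring A] [Ring B] (i : A →+* B) :
    Prop :=
  ∀ (L : Type) (_ : AddCommGroup L) (_ : Module A L),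
    letI : Module Aᵐᵒᵖ B := Module.compHom B (RingHom.op i)
    Function.Injective
      (NCT.mapLeft A (L := A) (L' := B) L i.toAddMonoidHom
        (fun a l => show i (l * a.unop) = i l * i a.unop from map_mul i l a.unop))
/-!
Both sides reduce to statements about a single element `x` of a right `A`-module `X`.
Since `X ⊗[A] A ≅ X`, purity of `i_M` says that `x ⊗ 1 = 0` in `X ⊗[A] End_B(M)` forces
`x = 0`; total faithfulness says that `x ⊗ m = 0` for all `m : M` forces `x = 0`. The two
premises are equivalent. Evaluation at `m` is `A`-linear `End_B(M) → M`, so `x ⊗ 1 = 0` gives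
`x ⊗ m = 0`. Conversely, by the dual basis lemma `1 = ∑ⱼ φⱼ(-) • vⱼ`, and each
`m ↦ φⱼ(-) • m` is an `A`-linear map `M → End_B(M)`, so `x ⊗ vⱼ = 0` for all `j` gives
`x ⊗ 1 = 0`.
-/

theorem Module.Projective.exists_sum_smulRight_eq_id (R M : Type*) [Ring R] [AddCommGroup M]
    [Module R M] [Module.Finite R M] [Module.Projective R M] :
    ∃ (n : ℕ) (φ : Fin n → M →ₗ[R] R) (v : Fin n → M),
      ∑ j, (φ j).smulRight (v j) = LinearMap.id := by
  obtain ⟨n, f, g, -, -, hfg⟩ := Module.Finite.exists_comp_eq_id_of_projective R M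
  refine ⟨n, fun j => LinearMap.proj j ∘ₗ g, fun j => f (Pi.single j 1), ?_⟩
  ext m
  conv_rhs => rw [← hfg, LinearMap.comp_apply, pi_eq_sum_univ' (g m), map_sum]
  simp

namespace NCT

variable (A : Type) [Ring A] {L M N : Type} [AddCommGroup L] [AddCommGroup M]
  [AddCommGroup N] [Module Aᵐᵒᵖ L] [Module A M] [Module A N]

theorem smul_tmul (l : L) (a : A) (m : M) : tmul A (op a • l) m = tmul A l (a • m) :=
  QuotientAddGroup.eq_iff_sub_mem.mpr (AddSubgroup.subset_closure ⟨l, a, m, rfl⟩)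

theorem zero_tmul (m : M) : tmul A (0 : L) m = 0 := by
  rw [tmul, TensorProduct.zero_tmul, QuotientAddGroup.mk_zero]

theorem add_tmul (l l' : L) (m : M) : tmul A (l + l') m = tmul A l m + tmul A l' m := by
  rw [tmul, TensorProduct.add_tmul, QuotientAddGroup.mk_add, tmul, tmul]

theorem tmul_sum {ι : Type*} (s : Finset ι) (l : L) (v : ι → M) :
    tmul A l (∑ j ∈ s, v j) = ∑ j ∈ s, tmul A l (v j) :=
  map_sum ((QuotientAddGroup.mk' (NCrel A L M)).comp (TensorProduct.mk ℤ L M l).toAddMonoidHom)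
    v s

theorem mapRight_tmul (f : M →+ N) (hf : ∀ (a : A) (m : M), f (a • m) = a • f m) (l : L)
    (m : M) : mapRight A L f hf (tmul A l m) = tmul A l (f m) :=
  rfl

theorem tmul_eq_zero_of_map {l : L} {m : M} (h : tmul A l m = 0) (f : M →+ N)
    (hf : ∀ (a : A) (m : M), f (a • m) = a • f m) : tmul A l (f m) = 0 := by
  rw [← mapRight_tmul A f hf, h, map_zero]

noncomputable def contract : NCT A L A →+ L :=
  QuotientAddGroup.lift _
    (TensorProduct.liftAddHom
      (AddMonoidHom.mk' (fun l => AddMonoidHom.mk' (fun a : A => op a • l)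
        (fun a b => by simp [add_smul]))
        (fun l l' => by ext a; simp [smul_add]))
      (fun z l a => by simp only [AddMonoidHom.mk'_apply, op_smul, smul_assoc]; rw [smul_comm]))
    ((AddSubgroup.closure_le _).mpr <| by
      rintro y ⟨l, a, b, rfl⟩
      simp [mul_smul])

theorem contract_tmul (l : L) (a : A) : contract A (tmul A l a) = op a • l :=
  rfl

theorem tmul_contract (t : NCT A L A) : tmul A (contract A t) 1 = t := by
  induction t using QuotientAddGroup.induction_on with | H z => ?_
  induction z using TensorProduct.induction_on with
  | zero => exact zero_tmul A 1
  | tmul l a => exact (smul_tmul A l a 1).trans (congrArg _ (mul_one a))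
  | add x y hx hy =>
    rw [QuotientAddGroup.mk_add, map_add, add_tmul, hx, hy]

theorem eq_zero_of_tmul_one_eq_zero {l : L} (h : tmul A l (1 : A) = 0) : l = 0 := by
  simpa [contract_tmul] using congrArg (contract A) h

theorem mapRight_injective_iff (f : A →+ N) (hf : ∀ (a b : A), f (a * b) = a • f b) :
    Function.Injective (mapRight A L f hf) ↔ ∀ l : L, tmul A l (f 1) = 0 → l = 0 := by
  refine ⟨fun hinj l hl => eq_zero_of_tmul_one_eq_zero A (hinj ?_), fun h => ?_⟩
  · rw [map_zero, mapRight_tmul, hl]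
  · refine (injective_iff_map_eq_zero _).mpr fun t ht => ?_
    rw [← tmul_contract A t, mapRight_tmul] at ht
    rw [← tmul_contract A t, h _ ht, zero_tmul]

theorem injective_tmul_iff : Function.Injective (fun (l : L) (m : M) => tmul A l m) ↔
    ∀ l : L, (∀ m : M, tmul A l m = 0) → l = 0 :=
  injective_iff_map_eq_zero (AddMonoidHom.mk' (fun (l : L) (m : M) => tmul A l m)
    fun l l' => funext (add_tmul A l l')) |>.trans <| forall_congr' fun l => by
      rw [funext_iff]; rfl

theorem tmul_one_end_eq_zero_iff {R : Type} [Ring R] [Module R M] [SMulCommClass A R M]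
    [Module.Finite R M] [Module.Projective R M] (l : L) :
    letI : Module A (Module.End R M) :=
      Module.compHom _ (Module.toModuleEnd R M : A →+* Module.End R M)
    tmul A l (1 : Module.End R M) = 0 ↔ ∀ m : M, tmul A l m = 0 := by
  let : Module A (Module.End R M) :=
    Module.compHom _ (Module.toModuleEnd R M : A →+* Module.End R M)
  refine ⟨fun h m => tmul_eq_zero_of_map A h
    (AddMonoidHom.mk' (fun e : Module.End R M => e m) fun _ _ => rfl) fun _ _ => rfl, fun h => ?_⟩
  obtain ⟨n, φ, v, hφv⟩ := Module.Projective.exists_sum_smulRight_eq_id R M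
  rw [← Module.End.one_eq_id] at hφv
  rw [← hφv, tmul_sum]
  refine Finset.sum_eq_zero fun j _ => tmul_eq_zero_of_map A (h (v j))
    (AddMonoidHom.mk' (φ j).smulRight fun m m' => by ext; simp [smul_add]) fun a m => ?_
  ext m'
  exact (smul_comm a (φ j m') m).symm

end NCT

theorem RingHom.leftPure_iff {A B : Type} [Ring A] [Ring B] (i : A →+* B) :
    i.LeftPure ↔ ∀ (L : Type) (_ : AddCommGroup L) (_ : Module Aᵐᵒᵖ L) (l : L),
      letI : Module A B := Module.compHom B i
      NCT.tmul A l (1 : B) = 0 → l = 0 := by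
  let : Module A B := Module.compHom B i
  refine forall₃_congr fun L _ _ => (NCT.mapRight_injective_iff A _ _).trans ?_
  rw [RingHom.toAddMonoidHom_eq_coe, AddMonoidHom.coe_coe, map_one]

/-- Let `A` and `B` be rings and `M` an `(A,B)`-bimodule that is
finitely generated projective as a right `B`-module, with `E = End_B(M)` the
endomorphism ring of `M_B` and `i_M : A → E`, `a ↦ (m ↦ a • m)`, the canonical ring
homomorphism.  Then `M` is totally faithful as a left `A`-module (for every right
`A`-module `X`, the map `X → Hom_B(M, X ⊗[A] M)`, `x ↦ (m ↦ x ⊗ m)`, is injective) if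
and only if `i_M` is a pure morphism of left `A`-modules.  (Right modules are encoded
as modules over the opposite ring.) -/
theorem stmt15 {A B : Type} [Ring A] [Ring B]
    (M : Type) [AddCommGroup M] [Module A M] [Module Bᵐᵒᵖ M] [SMulCommClass A Bᵐᵒᵖ M]
    [Module.Finite Bᵐᵒᵖ M] [Module.Projective Bᵐᵒᵖ M] :
    (∀ (X : Type) (_ : AddCommGroup X) (_ : Module Aᵐᵒᵖ X),
      Function.Injective (fun x : X => (fun m : M => NCT.tmul A x m))) ↔
    (Module.toModuleEnd Bᵐᵒᵖ M : A →+* Module.End Bᵐᵒᵖ M).LeftPure := by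
  simp only [RingHom.leftPure_iff, NCT.tmul_one_end_eq_zero_iff, NCT.injective_tmul_iff]
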